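/- Let T and Δ be independent exponentially distributed random variables with rates λ_T > 0 and λ_Δ > 0, λ_Δ > λ_T, and let x > 0. Then the hit probability under delay exceeds or equals the zero-delay hit probability, i.e. P(Δ < x and x < Δ + T) ≥ P(x < T), if and only if λ_Δ·exp(−x·λ_Δ) ≤ λ_T·exp(−x·λ_T). In fact, P(Δ < x and x < Δ + T) − P(x < T) = (λ_T·exp(−x·λ_T) − λ_Δ·exp(−x·λ_Δ)) / (λ_Δ − λ_T). -/

import Mathlib

/-!
Given `Δ = δ < x`, the delayed request hits iff `T > x - δ`, which has probability
`exp (-λ_T (x - δ))`. Integrating this against the density of `Δ` gives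
`P(Δ < x < Δ + T) = λ_Δ (exp (-λ_T x) - exp (-λ_Δ x)) / (λ_Δ - λ_T)`, and subtracting
`P(x < T) = exp (-λ_T x)` leaves a fraction with positive denominator `λ_Δ - λ_T`.
-/

open MeasureTheory ProbabilityTheory Set Real

namespace ProbabilityTheory

lemma expMeasure_Ioi {r y : ℝ} (hr : 0 < r) (hy : 0 ≤ y) :
    expMeasure r (Ioi y) = ENNReal.ofReal (exp (-(r * y))) := by
  have := isProbabilityMeasure_expMeasure hr
  have hexp : exp (-(r * y)) ≤ 1 := exp_le_one_iff.2 (neg_nonpos.2 (mul_nonneg hr.le hy))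
  rw [← compl_Iic, prob_compl_eq_one_sub measurableSet_Iic, ← ofReal_cdf, cdf_expMeasure_eq hr,
    if_pos hy, ← ENNReal.ofReal_one, ← ENNReal.ofReal_sub _ (sub_nonneg.2 hexp), sub_sub_cancel]

lemma setLIntegral_Iio_expMeasure_ofReal {r x : ℝ} (hr : 0 ≤ r) (hx : 0 ≤ x) {g : ℝ → ℝ}
    (hg : Continuous g) (hg0 : ∀ δ, 0 ≤ g δ) :
    ∫⁻ δ in Iio x, ENNReal.ofReal (g δ) ∂expMeasure r
      = ENNReal.ofReal (∫ δ in 0..x, r * exp (-(r * δ)) * g δ) := by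
  have hpdf : Measurable (exponentialPDF r) := (measurable_exponentialPDFReal r).ennreal_ofReal
  have hint : IntegrableOn (fun δ ↦ r * exp (-(r * δ)) * g δ) (Ico 0 x) :=
    (Continuous.integrableOn_Icc (by fun_prop)).mono_set Ico_subset_Icc_self
  rw [show expMeasure r = volume.withDensity (exponentialPDF r) from rfl,
    setLIntegral_withDensity_eq_setLIntegral_mul _ hpdf (by fun_prop) measurableSet_Iio,
    ← Iio_union_Ico_eq_Iio hx,
    lintegral_union measurableSet_Ico ((Iio_disjoint_Ici le_rfl).mono_right Ico_subset_Ici_self),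
    setLIntegral_congr_fun measurableSet_Iio (g := fun _ ↦ 0)
      (fun δ hδ ↦ by simp [exponentialPDF_of_neg (mem_Iio.1 hδ)]),
    setLIntegral_congr_fun measurableSet_Ico
      (g := fun δ ↦ ENNReal.ofReal (r * exp (-(r * δ)) * g δ))
      (fun δ hδ ↦ by
        have : 0 ≤ r * exp (-(r * δ)) := by positivity
        simp [exponentialPDF_of_nonneg hδ.1, ENNReal.ofReal_mul this]),
    lintegral_zero, zero_add, ← ofReal_integral_eq_lintegral_ofReal hint
      (Filter.Eventually.of_forall fun δ ↦ by have := hg0 δ; positivity),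
    integral_Ico_eq_integral_Ioo, ← integral_Ioc_eq_integral_Ioo,
    intervalIntegral.integral_of_le hx]

lemma integral_exp_mul_exp_sub {r s : ℝ} (hrs : r ≠ s) (x : ℝ) :
    ∫ δ in 0..x, r * exp (-(r * δ)) * exp (-(s * (x - δ)))
      = r * (exp (-(s * x)) - exp (-(r * x))) / (r - s) := by
  have hsr : s - r ≠ 0 := sub_ne_zero.2 hrs.symm
  have hfun : (fun δ ↦ r * exp (-(r * δ)) * exp (-(s * (x - δ))))
      = fun δ ↦ r * exp (-(s * x)) * exp ((s - r) * δ) := by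
    ext δ; rw [mul_assoc, mul_assoc, ← exp_add, ← exp_add]; ring_nf
  have hshift : exp (-(s * x)) * exp ((s - r) * x) = exp (-(r * x)) := by
    rw [← exp_add]; ring_nf
  rw [hfun, intervalIntegral.integral_const_mul, intervalIntegral.integral_comp_mul_left _ hsr,
    integral_exp, smul_eq_mul, mul_zero, exp_zero, ← hshift]
  field_simp
  ring

def delayedHitSet (x : ℝ) : Set (ℝ × ℝ) := {p | p.1 < x ∧ x < p.1 + p.2}

lemma measurableSet_delayedHitSet (x : ℝ) : MeasurableSet (delayedHitSet x) :=
  (measurableSet_lt measurable_fst measurable_const).inter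
    (measurableSet_lt measurable_const (measurable_fst.add measurable_snd))

lemma expMeasure_preimage_mk_delayedHitSet {r : ℝ} (hr : 0 < r) (x δ : ℝ) :
    expMeasure r (Prod.mk δ ⁻¹' delayedHitSet x)
      = (Iio x).indicator (fun d ↦ ENNReal.ofReal (exp (-(r * (x - d))))) δ := by
  by_cases hδ : δ < x
  · have hslice : Prod.mk δ ⁻¹' delayedHitSet x = Ioi (x - δ) := by
      ext t; simp [delayedHitSet, hδ, sub_lt_iff_lt_add']
    rw [hslice, expMeasure_Ioi hr (sub_nonneg.2 hδ.le), indicator_of_mem (mem_Iio.2 hδ)]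
  · have hslice : Prod.mk δ ⁻¹' delayedHitSet x = ∅ := by
      ext t; simp [delayedHitSet, hδ]
    rw [hslice, measure_empty, indicator_of_notMem (mt mem_Iio.1 hδ)]

lemma prod_expMeasure_delayedHitSet {ν : Measure ℝ} {r : ℝ} (hr : 0 < r) (x : ℝ) :
    (ν.prod (expMeasure r)) (delayedHitSet x)
      = ∫⁻ δ in Iio x, ENNReal.ofReal (exp (-(r * (x - δ)))) ∂ν := by
  have := isProbabilityMeasure_expMeasure hr
  simp_rw [Measure.prod_apply (measurableSet_delayedHitSet x),
    expMeasure_preimage_mk_delayedHitSet hr]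
  exact lintegral_indicator measurableSet_Iio _

lemma measureReal_prod_expMeasure_delayedHitSet {r s x : ℝ} (hr : 0 < r) (hs : 0 < s)
    (hrs : r ≠ s) (hx : 0 ≤ x) :
    ((expMeasure r).prod (expMeasure s)).real (delayedHitSet x)
      = r * (exp (-(s * x)) - exp (-(r * x))) / (r - s) := by
  rw [measureReal_def, prod_expMeasure_delayedHitSet hs,
    setLIntegral_Iio_expMeasure_ofReal hr.le hx (by fun_prop) (fun _ ↦ (exp_pos _).le),
    ENNReal.toReal_ofReal (intervalIntegral.integral_nonneg hx fun δ _ ↦ by positivity),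
    integral_exp_mul_exp_sub hrs]

end ProbabilityTheory

/-- Let `T` and `Δ` be independent exponentials with rates `0 < lamT < lamD` and let
`x > 0` be the deterministic inter-request time of a periodic request stream. Then the
hit probability under delay exceeds or equals the zero-delay hit probability, i.e.
`P(Δ < x < Δ + T) ≥ P(x < T)`, if and only if
`lamD·exp(-x·lamD) ≤ lamT·exp(-x·lamT)`; in fact
`P(Δ < x < Δ + T) - P(x < T) = (lamT·exp(-x·lamT) - lamD·exp(-x·lamD))/(lamD - lamT)`. -/
theorem delay_improves_hit_probability_iff
    {Ω : Type*} [MeasurableSpace Ω] (μ : Measure Ω) [IsProbabilityMeasure μ]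
    (T Δ : Ω → ℝ) (lamT lamD : ℝ) (hlamT : 0 < lamT) (hlt : lamT < lamD)
    (hmT : Measurable T) (hmΔ : Measurable Δ)
    (hT : μ.map T = expMeasure lamT) (hΔ : μ.map Δ = expMeasure lamD)
    (hindep : IndepFun T Δ μ) (x : ℝ) (hx : 0 < x) :
    ((μ {ω | Δ ω < x ∧ x < Δ ω + T ω}).toReal ≥ (μ {ω | x < T ω}).toReal ↔
        lamD * Real.exp (-x * lamD) ≤ lamT * Real.exp (-x * lamT)) ∧
      (μ {ω | Δ ω < x ∧ x < Δ ω + T ω}).toReal - (μ {ω | x < T ω}).toReal =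
        (lamT * Real.exp (-x * lamT) - lamD * Real.exp (-x * lamD)) / (lamD - lamT) := by
  have hgap : 0 < lamD - lamT := sub_pos.2 hlt
  have hlaw : μ.map (fun ω ↦ (Δ ω, T ω)) = (expMeasure lamD).prod (expMeasure lamT) := by
    rw [← hΔ, ← hT]
    exact (indepFun_iff_map_prod_eq_prod_map_map hmΔ.aemeasurable hmT.aemeasurable).1 hindep.symm
  have hmiss : μ.real {ω | x < T ω} = exp (-(lamT * x)) := by
    change μ.real (T ⁻¹' Ioi x) = _
    rw [← map_measureReal_apply hmT measurableSet_Ioi, hT, measureReal_def,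
      expMeasure_Ioi hlamT hx.le, ENNReal.toReal_ofReal (exp_pos _).le]
  have hhit : μ.real {ω | Δ ω < x ∧ x < Δ ω + T ω}
      = lamD * (exp (-(lamT * x)) - exp (-(lamD * x))) / (lamD - lamT) := by
    change μ.real ((fun ω ↦ (Δ ω, T ω)) ⁻¹' delayedHitSet x) = _
    rw [← map_measureReal_apply (hmΔ.prodMk hmT) (measurableSet_delayedHitSet x), hlaw,
      measureReal_prod_expMeasure_delayedHitSet (hlamT.trans hlt) hlamT hlt.ne' hx.le]
  have hdiff : μ.real {ω | Δ ω < x ∧ x < Δ ω + T ω} - μ.real {ω | x < T ω}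
      = (lamT * exp (-(lamT * x)) - lamD * exp (-(lamD * x))) / (lamD - lamT) := by
    rw [hhit, hmiss]
    field_simp
    ring
  simp only [← measureReal_def, ge_iff_le, neg_mul, mul_comm x]
  refine ⟨?_, hdiff⟩
  rw [← sub_nonneg, hdiff, le_div_iff₀ hgap, zero_mul, sub_nonneg]
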